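/- arXiv:1902.05213 — 5 statements merged into one kernel-verified Lean document; each statement's English description precedes it below -/
import Mathlib

section
/- Let i ≠ i* be a sub-optimal arm and define A_i(t) = ⌈(2 β^{1/ξ} t^{α/ξ} / Δ_i)^{1/(1−η)}⌉. Then for all integers s and t with A_i(t) ≤ s ≤ t, the upper confidence bound U_{i,s,t} = X̄_{i,s} + B_{t,s} satisfies P(U_{i,s,t} > μ*) ≤ t^{−α}. -/
open MeasureTheory ProbabilityTheory Finset

noncomputable section

/-- Empirical average `X̄_{i,n} = (1/n) ∑_{t=1}^n X_{i,t}` of the first `n` rewards of arm `i`. -/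
def empAvg {Ω : Type*} {K : ℕ} (X : Fin K → ℕ → Ω → ℝ) (i : Fin K) (n : ℕ) (ω : Ω) : ℝ :=
  (∑ t ∈ Finset.Icc 1 n, X i t ω) / n

/-- Bonus term `B_{t,s} = β^{1/ξ} t^{α/ξ} / s^{1-η}`. -/
def bonus (β ξ α η : ℝ) (t s : ℕ) : ℝ :=
  β ^ (1 / ξ) * (t : ℝ) ^ (α / ξ) / (s : ℝ) ^ (1 - η)

/-- Upper confidence index `U_{i,s,t} = X̄_{i,s} + B_{t,s}`. -/
def ucbIdx {Ω : Type*} {K : ℕ} (X : Fin K → ℕ → Ω → ℝ) (β ξ α η : ℝ)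
    (i : Fin K) (s t : ℕ) (ω : Ω) : ℝ :=
  empAvg X i s ω + bonus β ξ α η t s

/-- If `i ≠ i*` is a sub-optimal arm and
`A_i(t) = ⌈(2 β^{1/ξ} t^{α/ξ} / Δ_i)^{1/(1−η)}⌉`, then for all integers `s`, `t` with
`A_i(t) ≤ s ≤ t`, one has `P(U_{i,s,t} > μ*) ≤ t^{−α}`. -/
theorem ucb_suboptimal_index_prob
    {Ω : Type*} [MeasurableSpace Ω] (P : Measure Ω) [IsProbabilityMeasure P]
    (K : ℕ) (hK : 2 ≤ K) (R : ℝ) (hR : 0 < R)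
    (X : Fin K → ℕ → Ω → ℝ)
    (hXmeas : ∀ i t, Measurable (X i t))
    (hXbdd : ∀ i t ω, |X i t ω| ≤ R)
    (μ : Fin K → ℝ)
    (hconv : ∀ i, Filter.Tendsto (fun n => ∫ ω, empAvg X i n ω ∂P)
      Filter.atTop (nhds (μ i)))
    (β ξ η α : ℝ) (hβ : 1 < β) (hξ : 0 < ξ) (hη : 1 / 2 ≤ η) (hη' : η < 1) (hα : 0 < α)
    (hconc : ∀ i : Fin K, ∀ n : ℕ, 1 ≤ n → ∀ z : ℝ, 1 ≤ z →
      P {ω | (n : ℝ) * empAvg X i n ω - n * μ i ≥ (n : ℝ) ^ η * z}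
        ≤ ENNReal.ofReal (β / z ^ ξ) ∧
      P {ω | (n : ℝ) * empAvg X i n ω - n * μ i ≤ -((n : ℝ) ^ η * z)}
        ≤ ENNReal.ofReal (β / z ^ ξ))
    (istar : Fin K) (hopt : ∀ j, j ≠ istar → μ j < μ istar)
    (i : Fin K) (hi : i ≠ istar)
    (A : ℕ → ℕ)
    (hA : ∀ t : ℕ,
      A t = ⌈(2 * β ^ (1 / ξ) * (t : ℝ) ^ (α / ξ) / (μ istar - μ i)) ^ (1 / (1 - η))⌉₊)
    (s t : ℕ) (ht : 1 ≤ t) (hs1 : A t ≤ s) (hs2 : s ≤ t) :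
    P {ω | ucbIdx X β ξ α η i s t ω > μ istar} ≤ ENNReal.ofReal ((t : ℝ) ^ (-α)) := by
  have hΔ : 0 < μ istar - μ i := sub_pos.mpr (hopt i hi)
  have hβ0 : (0:ℝ) < β := lt_trans one_pos hβ
  have ht1 : (1:ℝ) ≤ (t:ℝ) := by exact_mod_cast ht
  have ht0 : (0:ℝ) < (t:ℝ) := lt_of_lt_of_le one_pos ht1
  have hβr : (1:ℝ) ≤ β ^ (1/ξ) := Real.one_le_rpow hβ.le (by positivity)
  have htr : (1:ℝ) ≤ (t:ℝ) ^ (α/ξ) := Real.one_le_rpow ht1 (by positivity)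
  set z : ℝ := β ^ (1/ξ) * (t:ℝ) ^ (α/ξ) with hzdef
  have hz1 : (1:ℝ) ≤ z := by nlinarith
  have hz0 : (0:ℝ) < z := lt_of_lt_of_le one_pos hz1
  have h1η : (0:ℝ) < 1 - η := by linarith
  set x : ℝ := 2 * β ^ (1/ξ) * (t:ℝ) ^ (α/ξ) / (μ istar - μ i) with hxdef
  have hx0 : 0 < x := by positivity
  have hAs : (x ^ (1/(1-η)) : ℝ) ≤ (s:ℝ) := by
    have h1 : x ^ (1/(1-η)) ≤ (A t : ℝ) := by rw [hA t]; exact Nat.le_ceil _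
    have h2 : (A t : ℝ) ≤ (s:ℝ) := by exact_mod_cast hs1
    linarith
  have hs1' : 1 ≤ s := by
    have : 0 < A t := by
      rw [hA t]
      exact Nat.ceil_pos.mpr (Real.rpow_pos_of_pos hx0 _)
    omega
  have hs0 : (0:ℝ) < (s:ℝ) := by exact_mod_cast hs1'
  -- s^(1-η) ≥ x
  have hsx : x ≤ (s:ℝ) ^ (1-η) := by
    have := Real.rpow_le_rpow (Real.rpow_nonneg hx0.le _) hAs h1η.le
    rwa [← Real.rpow_mul hx0.le, one_div,
      inv_mul_cancel₀ h1η.ne', Real.rpow_one] at this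
  have hspow0 : (0:ℝ) < (s:ℝ) ^ (1-η) := Real.rpow_pos_of_pos hs0 _
  -- bonus ≤ Δ/2
  have hB : bonus β ξ α η t s ≤ (μ istar - μ i) / 2 := by
    rw [bonus]
    have h1 : β ^ (1/ξ) * (t:ℝ) ^ (α/ξ) / (s:ℝ) ^ (1-η) ≤ z / x :=
      div_le_div_of_nonneg_left hz0.le hx0 hsx
    have h2 : z / x = (μ istar - μ i) / 2 := by
      rw [hxdef, hzdef]
      field_simp
    calc β ^ (1/ξ) * (t:ℝ) ^ (α/ξ) / (s:ℝ) ^ (1-η) ≤ z / x := h1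
      _ = _ := h2
  -- s * bonus = s^η * z
  have hbz : (s:ℝ) * bonus β ξ α η t s = (s:ℝ) ^ η * z := by
    rw [bonus, ← hzdef]
    have hss : (s:ℝ) ^ η * (s:ℝ) ^ (1-η) = (s:ℝ) := by
      rw [← Real.rpow_add hs0]; norm_num
    field_simp
    nlinarith [hss]
  have hB0 : 0 ≤ bonus β ξ α η t s := by
    rw [bonus]; positivity
  -- event inclusion
  have hsub : {ω | ucbIdx X β ξ α η i s t ω > μ istar} ⊆
      {ω | (s:ℝ) * empAvg X i s ω - (s:ℝ) * μ i ≥ (s:ℝ) ^ η * z} := by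
    intro ω hω
    simp only [Set.mem_setOf_eq, ucbIdx] at hω ⊢
    have h1 : empAvg X i s ω - μ i > bonus β ξ α η t s := by linarith
    have h2 : (s:ℝ) * (empAvg X i s ω - μ i) ≥ (s:ℝ) * bonus β ξ α η t s := by
      nlinarith
    rw [hbz] at h2
    linarith [h2, mul_sub (s:ℝ) (empAvg X i s ω) (μ i)]
  have hmain := (hconc i s hs1' z hz1).1
  have hzξ : z ^ ξ = β * (t:ℝ) ^ α := by
    rw [hzdef, Real.mul_rpow (by positivity) (by positivity),
      ← Real.rpow_mul hβ0.le, ← Real.rpow_mul ht0.le,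
      one_div_mul_cancel hξ.ne', div_mul_cancel₀ _ hξ.ne', Real.rpow_one]
  have heq : β / z ^ ξ = (t:ℝ) ^ (-α) := by
    rw [hzξ, Real.rpow_neg ht0.le]
    have htα : (0:ℝ) < (t:ℝ) ^ α := Real.rpow_pos_of_pos ht0 _
    field_simp
  calc P {ω | ucbIdx X β ξ α η i s t ω > μ istar}
      ≤ P {ω | (s:ℝ) * empAvg X i s ω - (s:ℝ) * μ i ≥ (s:ℝ) ^ η * z} :=
        measure_mono hsub
    _ ≤ ENNReal.ofReal (β / z ^ ξ) := hmain
    _ = ENNReal.ofReal ((t:ℝ) ^ (-α)) := by rw [heq]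
end
end

section
/- Let i ≠ i* be a sub-optimal arm, let n ≥ 1 and let t be an integer with 1 ≤ t ≤ n. With A_i(n) = ⌈(2 β^{1/ξ} n^{α/ξ} / Δ_i)^{1/(1−η)}⌉, the probability that some play count s with A_i(n) ≤ s ≤ t gives an upper confidence index exceeding μ* is small: P(∃ s : A_i(n) ≤ s ≤ t such that U_{i,s,t} > μ*) ≤ t^{1−α}. -/
open MeasureTheory ProbabilityTheory Finset

noncomputable section

/-- Probability that some play count `s` with `A_i(n) ≤ s ≤ t` gives an upper confidence
index exceeding `μ*` is at most `t^{1−α}`. -/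
theorem ucb_suboptimal_exists_index_prob
    {Ω : Type*} [MeasurableSpace Ω] (P : Measure Ω) [IsProbabilityMeasure P]
    (K : ℕ) (hK : 2 ≤ K) (R : ℝ) (hR : 0 < R)
    (X : Fin K → ℕ → Ω → ℝ)
    (hXmeas : ∀ i t, Measurable (X i t))
    (hXbdd : ∀ i t ω, |X i t ω| ≤ R)
    (μ : Fin K → ℝ)
    (hconv : ∀ i, Filter.Tendsto (fun n => ∫ ω, empAvg X i n ω ∂P)
      Filter.atTop (nhds (μ i)))
    (β ξ η α : ℝ) (hβ : 1 < β) (hξ : 0 < ξ) (hη : 1 / 2 ≤ η) (hη' : η < 1) (hα : 0 < α)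
    (hconc : ∀ i : Fin K, ∀ n : ℕ, 1 ≤ n → ∀ z : ℝ, 1 ≤ z →
      P {ω | (n : ℝ) * empAvg X i n ω - n * μ i ≥ (n : ℝ) ^ η * z}
        ≤ ENNReal.ofReal (β / z ^ ξ) ∧
      P {ω | (n : ℝ) * empAvg X i n ω - n * μ i ≤ -((n : ℝ) ^ η * z)}
        ≤ ENNReal.ofReal (β / z ^ ξ))
    (istar : Fin K) (hopt : ∀ j, j ≠ istar → μ j < μ istar)
    (i : Fin K) (hi : i ≠ istar)
    (A : ℕ → ℕ)
    (hA : ∀ n : ℕ,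
      A n = ⌈(2 * β ^ (1 / ξ) * (n : ℝ) ^ (α / ξ) / (μ istar - μ i)) ^ (1 / (1 - η))⌉₊)
    (n t : ℕ) (hn : 1 ≤ n) (ht1 : 1 ≤ t) (htn : t ≤ n) :
    P {ω | ∃ s : ℕ, A n ≤ s ∧ s ≤ t ∧ ucbIdx X β ξ α η i s t ω > μ istar}
      ≤ ENNReal.ofReal ((t : ℝ) ^ ((1 : ℝ) - α)) := by
  classical
  have hΔ : 0 < μ istar - μ i := sub_pos.mpr (hopt i hi)
  have hβ0 : (0:ℝ) < β := lt_trans one_pos hβ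
  have htR : (1:ℝ) ≤ (t:ℝ) := by exact_mod_cast ht1
  have ht0 : (0:ℝ) < (t:ℝ) := lt_of_lt_of_le one_pos htR
  have hnR : (1:ℝ) ≤ (n:ℝ) := by exact_mod_cast hn
  have h1η : (0:ℝ) < 1 - η := by linarith
  set z : ℝ := β ^ (1/ξ) * (t:ℝ) ^ (α/ξ) with hzdef
  have hb1 : (1:ℝ) ≤ β ^ (1/ξ) := Real.one_le_rpow hβ.le (by positivity)
  have hb2 : (1:ℝ) ≤ (t:ℝ) ^ (α/ξ) := Real.one_le_rpow htR (by positivity)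
  have hz1 : 1 ≤ z := by nlinarith
  have hz0 : 0 < z := lt_of_lt_of_le one_pos hz1
  set c : ℝ := 2 * β ^ (1/ξ) * (n:ℝ) ^ (α/ξ) / (μ istar - μ i) with hcdef
  have hnp : (0:ℝ) < (n:ℝ) ^ (α/ξ) := Real.rpow_pos_of_pos (by linarith) _
  have hc : 0 < c := by
    apply div_pos _ hΔ
    positivity
  have hA1 : 1 ≤ A n := by
    rw [hA n]
    exact Nat.one_le_ceil_iff.mpr (Real.rpow_pos_of_pos hc _)
  have hsub : {ω | ∃ s : ℕ, A n ≤ s ∧ s ≤ t ∧ ucbIdx X β ξ α η i s t ω > μ istar}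
      ⊆ ⋃ s ∈ Finset.Icc (A n) t,
        {ω | (s:ℝ) * empAvg X i s ω - s * μ i ≥ (s:ℝ) ^ η * z} := by
    intro ω hω
    obtain ⟨s, hAs, hst, hU⟩ := hω
    refine Set.mem_biUnion (Finset.mem_Icc.mpr ⟨hAs, hst⟩) ?_
    have hs1 : 1 ≤ s := le_trans hA1 hAs
    have hs0 : (0:ℝ) < (s:ℝ) := by exact_mod_cast hs1
    have hsc : c ≤ (s:ℝ) ^ (1-η) := by
      have h1 : c ^ (1/(1-η)) ≤ (s:ℝ) := by
        calc c ^ (1/(1-η)) ≤ (⌈c ^ (1/(1-η))⌉₊ : ℝ) := Nat.le_ceil _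
        _ ≤ (s:ℝ) := by exact_mod_cast (hA n ▸ hAs)
      have h2 := Real.rpow_le_rpow (Real.rpow_pos_of_pos hc _).le h1 h1η.le
      rwa [← Real.rpow_mul hc.le, one_div_mul_cancel (ne_of_gt h1η), Real.rpow_one] at h2
    have htn' : (t:ℝ)^(α/ξ) ≤ (n:ℝ)^(α/ξ) := by
      apply Real.rpow_le_rpow (by positivity) (by exact_mod_cast htn) (by positivity)
    have hKn : (0:ℝ) < β ^ (1/ξ) * (n:ℝ) ^ (α/ξ) := by positivity
    have hBleK : bonus β ξ α η t s ≤ β ^ (1/ξ) * (n:ℝ) ^ (α/ξ) / c := by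
      unfold bonus
      exact div_le_div₀ hKn.le (mul_le_mul_of_nonneg_left htn' (by positivity)) hc hsc
    have hceq : β ^ (1/ξ) * (n:ℝ) ^ (α/ξ) / c = (μ istar - μ i) / 2 := by
      rw [hcdef]
      field_simp
    have hB : bonus β ξ α η t s ≤ (μ istar - μ i) / 2 := hceq ▸ hBleK
    have hX : empAvg X i s ω - μ i > bonus β ξ α η t s := by
      have hU' : empAvg X i s ω + bonus β ξ α η t s > μ istar := hU
      linarith
    have hBz : bonus β ξ α η t s = z / (s:ℝ) ^ (1-η) := rfl
    have hsp : (0:ℝ) < (s:ℝ) ^ (1-η) := Real.rpow_pos_of_pos hs0 _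
    have hkey : (s:ℝ) * (z / (s:ℝ)^(1-η)) = (s:ℝ)^η * z := by
      have hdq : (s:ℝ)^η = (s:ℝ) / (s:ℝ)^(1-η) := by
        have h5 := Real.rpow_sub hs0 1 (1-η)
        rw [Real.rpow_one] at h5
        rw [show (1:ℝ)-(1-η) = η by ring] at h5
        exact h5
      rw [hdq]; ring
    have hmul : (s:ℝ) * (empAvg X i s ω - μ i) ≥ (s:ℝ) * (z / (s:ℝ)^(1-η)) := by
      apply mul_le_mul_of_nonneg_left _ hs0.le
      rw [← hBz]; exact hX.le
    have : (s:ℝ) * empAvg X i s ω - (s:ℝ) * μ i ≥ (s:ℝ)^η * z := by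
      rw [← hkey]; linarith [hmul]
    exact this
  calc P {ω | ∃ s : ℕ, A n ≤ s ∧ s ≤ t ∧ ucbIdx X β ξ α η i s t ω > μ istar}
      ≤ P (⋃ s ∈ Finset.Icc (A n) t,
        {ω | (s:ℝ) * empAvg X i s ω - s * μ i ≥ (s:ℝ) ^ η * z}) := measure_mono hsub
    _ ≤ ∑ s ∈ Finset.Icc (A n) t,
        P {ω | (s:ℝ) * empAvg X i s ω - s * μ i ≥ (s:ℝ) ^ η * z} :=
        measure_biUnion_finset_le _ _
    _ ≤ ∑ s ∈ Finset.Icc (A n) t, ENNReal.ofReal (β / z ^ ξ) := by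
        apply Finset.sum_le_sum
        intro s hs
        obtain ⟨hAs, _⟩ := Finset.mem_Icc.mp hs
        exact (hconc i s (le_trans hA1 hAs) z hz1).1
    _ = ((Finset.Icc (A n) t).card : ENNReal) * ENNReal.ofReal (β / z ^ ξ) := by
        rw [Finset.sum_const, nsmul_eq_mul]
    _ ≤ (t : ENNReal) * ENNReal.ofReal (β / z ^ ξ) := by
        gcongr
        · have hcard : (Finset.Icc (A n) t).card ≤ t := by
            rw [Nat.card_Icc]; omega
          exact_mod_cast hcard
    _ ≤ ENNReal.ofReal ((t : ℝ) ^ ((1 : ℝ) - α)) := by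
        rw [← ENNReal.ofReal_natCast t, ← ENNReal.ofReal_mul (by positivity)]
        apply ENNReal.ofReal_le_ofReal
        have hzξ : z ^ ξ = β * (t:ℝ) ^ α := by
          rw [hzdef, Real.mul_rpow (by positivity) (by positivity),
            ← Real.rpow_mul hβ0.le, ← Real.rpow_mul ht0.le,
            one_div_mul_cancel (ne_of_gt hξ), div_mul_cancel₀ _ (ne_of_gt hξ),
            Real.rpow_one]
        rw [hzξ]
        have htα : (0:ℝ) < (t:ℝ) ^ α := Real.rpow_pos_of_pos ht0 _
        have : (t:ℝ) ^ ((1:ℝ) - α) = (t:ℝ) / (t:ℝ) ^ α := by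
          rw [Real.rpow_sub ht0, Real.rpow_one]
        rw [this]
        apply le_of_eq
        field_simp
end
end

section
/- For every integer t ≥ 1, the probability that some play count s with 1 ≤ s ≤ t gives an upper confidence index of the optimal arm below μ* is small: P(∃ s : 1 ≤ s ≤ t such that U_{i*,s,t} ≤ μ*) ≤ t^{1−α}. -/
open MeasureTheory ProbabilityTheory Finset

noncomputable section

/-- For every integer `t ≥ 1`, the probability that some play count `s ∈ [1,t]` gives an
upper confidence index of the optimal arm below `μ*` is at most `t^{1−α}`. -/
theorem ucb_optimal_index_low_prob
    {Ω : Type*} [MeasurableSpace Ω] (P : Measure Ω) [IsProbabilityMeasure P]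
    (K : ℕ) (hK : 2 ≤ K) (R : ℝ) (hR : 0 < R)
    (X : Fin K → ℕ → Ω → ℝ)
    (hXmeas : ∀ i t, Measurable (X i t))
    (hXbdd : ∀ i t ω, |X i t ω| ≤ R)
    (μ : Fin K → ℝ)
    (hconv : ∀ i, Filter.Tendsto (fun n => ∫ ω, empAvg X i n ω ∂P)
      Filter.atTop (nhds (μ i)))
    (β ξ η α : ℝ) (hβ : 1 < β) (hξ : 0 < ξ) (hη : 1 / 2 ≤ η) (hη' : η < 1) (hα : 0 < α)
    (hconc : ∀ i : Fin K, ∀ n : ℕ, 1 ≤ n → ∀ z : ℝ, 1 ≤ z →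
      P {ω | (n : ℝ) * empAvg X i n ω - n * μ i ≥ (n : ℝ) ^ η * z}
        ≤ ENNReal.ofReal (β / z ^ ξ) ∧
      P {ω | (n : ℝ) * empAvg X i n ω - n * μ i ≤ -((n : ℝ) ^ η * z)}
        ≤ ENNReal.ofReal (β / z ^ ξ))
    (istar : Fin K) (hopt : ∀ j, j ≠ istar → μ j < μ istar)
    (t : ℕ) (ht : 1 ≤ t) :
    P {ω | ∃ s : ℕ, 1 ≤ s ∧ s ≤ t ∧ ucbIdx X β ξ α η istar s t ω ≤ μ istar}
      ≤ ENNReal.ofReal ((t : ℝ) ^ ((1 : ℝ) - α)) := by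
  set z : ℝ := β ^ (1 / ξ) * (t : ℝ) ^ (α / ξ) with hzdef
  have ht0 : (0 : ℝ) < t := by exact_mod_cast ht
  have hβ0 : (0 : ℝ) < β := lt_trans one_pos hβ
  have hz1 : 1 ≤ z := by
    have h1 : (1 : ℝ) ≤ β ^ (1 / ξ) := Real.one_le_rpow hβ.le (by positivity)
    have h2 : (1 : ℝ) ≤ (t : ℝ) ^ (α / ξ) :=
      Real.one_le_rpow (by exact_mod_cast ht) (by positivity)
    nlinarith
  have hsub : {ω | ∃ s : ℕ, 1 ≤ s ∧ s ≤ t ∧ ucbIdx X β ξ α η istar s t ω ≤ μ istar} ⊆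
      ⋃ s ∈ Finset.Icc 1 t,
        {ω | (s : ℝ) * empAvg X istar s ω - s * μ istar ≤ -((s : ℝ) ^ η * z)} := by
    intro ω hω
    obtain ⟨s, hs1, hst, hle⟩ := hω
    refine Set.mem_biUnion (Finset.mem_Icc.mpr ⟨hs1, hst⟩) ?_
    have hs0 : (0 : ℝ) < s := by exact_mod_cast hs1
    have hspow : (s : ℝ) ^ η * (s : ℝ) ^ (1 - η) = s := by
      rw [← Real.rpow_add hs0]; simp
    have hsne : (s : ℝ) ^ (1 - η) ≠ 0 := by positivity
    have hb : ucbIdx X β ξ α η istar s t ω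
        = empAvg X istar s ω + z / (s : ℝ) ^ (1 - η) := rfl
    rw [hb] at hle
    have key : (s : ℝ) * (z / (s : ℝ) ^ (1 - η)) = (s : ℝ) ^ η * z := by
      rw [mul_div_assoc']
      rw [div_eq_iff hsne]
      nlinarith [hspow]
    have hmul := mul_le_mul_of_nonneg_left hle hs0.le
    simp only [Set.mem_setOf_eq]
    nlinarith [hmul, key]
  have hfrac : β / z ^ ξ = (t : ℝ) ^ (-α) := by
    have hzξ : z ^ ξ = β * (t : ℝ) ^ α := by
      rw [hzdef, Real.mul_rpow (by positivity) (by positivity),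
        ← Real.rpow_mul hβ0.le, ← Real.rpow_mul ht0.le,
        one_div_mul_cancel hξ.ne', div_mul_cancel₀ α hξ.ne', Real.rpow_one]
    rw [hzξ, Real.rpow_neg ht0.le]
    field_simp
  calc P {ω | ∃ s : ℕ, 1 ≤ s ∧ s ≤ t ∧ ucbIdx X β ξ α η istar s t ω ≤ μ istar}
      ≤ P (⋃ s ∈ Finset.Icc 1 t,
          {ω | (s : ℝ) * empAvg X istar s ω - s * μ istar ≤ -((s : ℝ) ^ η * z)}) :=
        measure_mono hsub
    _ ≤ ∑ s ∈ Finset.Icc 1 t,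
          P {ω | (s : ℝ) * empAvg X istar s ω - s * μ istar ≤ -((s : ℝ) ^ η * z)} :=
        measure_biUnion_finset_le _ _
    _ ≤ ∑ s ∈ Finset.Icc 1 t, ENNReal.ofReal (β / z ^ ξ) :=
        Finset.sum_le_sum fun s hs =>
          (hconc istar s (Finset.mem_Icc.mp hs).1 z hz1).2
    _ = (t : ENNReal) * ENNReal.ofReal ((t : ℝ) ^ (-α)) := by
        rw [hfrac, Finset.sum_const, Nat.card_Icc, nsmul_eq_mul]
        norm_num
    _ = ENNReal.ofReal ((t : ℝ) ^ ((1 : ℝ) - α)) := by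
        rw [← ENNReal.ofReal_natCast, ← ENNReal.ofReal_mul ht0.le,
          sub_eq_add_neg, Real.rpow_add ht0, Real.rpow_one]
end
end

section
/- Suppose the UCB policy is run with a parameter α satisfying ξη(1−η) ≤ α < ξ(1−η) and α > 2. Then for every sub-optimal arm i ≠ i* and every integer n ≥ 1, the expected number of times arm i is played in the first n rounds satisfies E[T_i(n)] ≤ (2 β^{1/ξ} / Δ_i)^{1/(1−η)} · n^{α/(ξ(1−η))} + 2/(α−2) + 1. -/
open MeasureTheory ProbabilityTheory Finset

noncomputable section

/-- `T_i(t) = ∑_{l=1}^t 1{I_l = i}`, the number of plays of arm `i` up to (and including)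
time `t`. -/
def playCount {Ω : Type*} {K : ℕ} (I : ℕ → Ω → Fin K) (i : Fin K) (t : ℕ) (ω : Ω) : ℕ :=
  ((Finset.Icc 1 t).filter fun l => I l ω = i).card

/-- The `EReal`-valued index `X̄_{i,T_i(t)} + B_{t,T_i(t)}` used by the UCB policy at the end
of time `t`, with the convention that the index is `+∞` when `T_i(t) = 0`
(i.e. `B_{t,0} = +∞`). -/
def ucbIdxE {Ω : Type*} {K : ℕ} (X : Fin K → ℕ → Ω → ℝ) (β ξ α η : ℝ)
    (I : ℕ → Ω → Fin K) (j : Fin K) (t : ℕ) (ω : Ω) : EReal :=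
  if playCount I j t ω = 0 then ⊤
  else ((ucbIdx X β ξ α η j (playCount I j t ω) t ω : ℝ) : EReal)

/-! Let `A` be the `explorationBound` and `u = ⌊A⌋₊ + 1`. Then `T_i(n)` is at most `u` plus
the number of late pulls, i.e. pulls of `i` made when `i` already has `u` plays. At a late pull
at time `k + 1` the index of `i*` does not exceed that of `i`, so either the index of `i*`
underestimates `μ*`, or the empirical mean of `i` overshoots `μᵢ` by its width, or twice the
width of `i` exceeds the gap `Δᵢ`; the last case is impossible once `i` has `u` plays. Each of
the first two events is a union over at most `k` sample sizes of deviations at level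
`z = β^{1/ξ} k^{α/ξ}`, of probability `β / z^ξ = k^{-α}` each. A late pull needs both `i` and
`i*` to have been played, so `k ≥ 2`, and `∑_{k ≥ 2} 2 k^{1-α} ≤ 2/(α-2)`. -/

lemma sum_Ico_rpow_neg_le {q : ℝ} (hq : 1 < q) {m : ℕ} (hm : 0 < m) (n : ℕ) :
    ∑ k ∈ Ico (m + 1) n, (k : ℝ) ^ (-q) ≤ (m : ℝ) ^ (1 - q) / (q - 1) := by
  set N := n - (m + 1)
  have hm' : (0 : ℝ) < m := by exact_mod_cast hm
  have hanti : AntitoneOn (fun x : ℝ => x ^ (-q)) (Set.Icc m (m + N)) :=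
    fun x hx y _ hxy => Real.rpow_le_rpow_of_nonpos (hm'.trans_le hx.1) hxy (by linarith)
  have hzero : (0 : ℝ) ∉ Set.uIcc (m : ℝ) (m + N) := by
    rw [Set.uIcc_of_le (le_add_of_nonneg_right N.cast_nonneg)]
    exact fun h => hm'.not_ge h.1
  calc ∑ k ∈ Ico (m + 1) n, (k : ℝ) ^ (-q)
      = ∑ i ∈ range N, ((m : ℝ) + ((i + 1 : ℕ) : ℝ)) ^ (-q) := by
        rw [sum_Ico_eq_sum_range]
        exact sum_congr rfl fun i _ => by push_cast; ring_nf
    _ ≤ ∫ x in (m : ℝ)..m + N, x ^ (-q) := hanti.sum_le_integral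
    _ = ((m : ℝ) ^ (1 - q) - (m + N) ^ (1 - q)) / (q - 1) := by
        rw [integral_rpow (Or.inr ⟨by linarith, hzero⟩), show -q + 1 = 1 - q by ring,
          ← neg_sub q 1, div_neg, ← neg_div, neg_sub]
    _ ≤ (m : ℝ) ^ (1 - q) / (q - 1) := by
        gcongr
        exact sub_le_self _ (by positivity)

section PlayCount

variable {Ω : Type*} {K : ℕ} (I : ℕ → Ω → Fin K)

lemma playCount_eq_sum (i : Fin K) (t : ℕ) (ω : Ω) :
    playCount I i t ω = ∑ l ∈ Icc 1 t, if I l ω = i then 1 else 0 :=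
  card_filter _ _

@[simp]
lemma playCount_zero (i : Fin K) (ω : Ω) : playCount I i 0 ω = 0 := rfl

lemma playCount_succ (i : Fin K) (t : ℕ) (ω : Ω) :
    playCount I i (t + 1) ω = playCount I i t ω + if I (t + 1) ω = i then 1 else 0 := by
  simp only [playCount_eq_sum, sum_Icc_succ_top (Nat.le_add_left 1 t)]

lemma playCount_le (i : Fin K) (t : ℕ) (ω : Ω) : playCount I i t ω ≤ t :=
  (card_filter_le _ _).trans (Nat.card_Icc 1 t).le

lemma playCount_add_playCount_le {i j : Fin K} (hij : i ≠ j) (t : ℕ) (ω : Ω) :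
    playCount I i t ω + playCount I j t ω ≤ t := by
  unfold playCount
  rw [← card_union_of_disjoint (disjoint_filter.2 fun _ _ hi hj => hij (hi.symm.trans hj))]
  exact (card_le_card (union_subset (filter_subset _ _) (filter_subset _ _))).trans
    (Nat.card_Icc 1 t).le

lemma measurable_playCount [MeasurableSpace Ω] (hI : ∀ t, Measurable (I t)) (i : Fin K)
    (t : ℕ) : Measurable (playCount I i t) := by
  simp_rw [funext (playCount_eq_sum I i t)]
  exact Finset.measurable_sum _ fun l _ =>
    Measurable.ite (hI l (measurableSet_singleton i)) measurable_const measurable_const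

def latePulls (i : Fin K) (u k : ℕ) : Set Ω :=
  {ω | I (k + 1) ω = i ∧ u ≤ playCount I i k ω}

lemma measurableSet_latePulls [MeasurableSpace Ω] (hI : ∀ t, Measurable (I t)) (i : Fin K)
    (u k : ℕ) : MeasurableSet (latePulls I i u k) :=
  (hI (k + 1) (measurableSet_singleton i)).inter (measurable_playCount I hI i k measurableSet_Ici)

lemma playCount_le_add_sum_indicator_latePulls (i : Fin K) (u n : ℕ) (ω : Ω) :
    (playCount I i n ω : ℝ) ≤ u + ∑ k ∈ range n, (latePulls I i u k).indicator 1 ω := by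
  induction n with
  | zero => simp
  | succ k ih =>
    have hsum : 0 ≤ ∑ l ∈ range k, (latePulls I i u l).indicator (1 : Ω → ℝ) ω :=
      sum_nonneg fun _ _ => Set.indicator_nonneg (fun _ _ => zero_le_one) _
    have hind : 0 ≤ (latePulls I i u k).indicator (1 : Ω → ℝ) ω :=
      Set.indicator_nonneg (fun _ _ => zero_le_one) _
    rw [playCount_succ, sum_range_succ]
    by_cases hpull : I (k + 1) ω = i
    swap
    · rw [if_neg hpull]; push_cast; linarith
    rw [if_pos hpull]
    by_cases hlate : u ≤ playCount I i k ω
    · rw [Set.indicator_of_mem (show ω ∈ latePulls I i u k from ⟨hpull, hlate⟩), Pi.one_apply]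
      push_cast; linarith
    · have : (playCount I i k ω : ℝ) + 1 ≤ u := by exact_mod_cast Nat.lt_of_not_le hlate
      push_cast; linarith

lemma integral_playCount_le [MeasurableSpace Ω] (P : Measure Ω) [IsProbabilityMeasure P]
    (hI : ∀ t, Measurable (I t)) (i : Fin K) (u n : ℕ) :
    ∫ ω, (playCount I i n ω : ℝ) ∂P ≤ u + ∑ k ∈ range n, P.real (latePulls I i u k) := by
  have hint : ∀ k, Integrable ((latePulls I i u k).indicator (1 : Ω → ℝ)) P := fun k =>
    (integrable_const 1).indicator (measurableSet_latePulls I hI i u k)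
  calc ∫ ω, (playCount I i n ω : ℝ) ∂P
      ≤ ∫ ω, ((u : ℝ) + ∑ k ∈ range n, (latePulls I i u k).indicator 1 ω) ∂P :=
        integral_mono_of_nonneg (ae_of_all _ fun _ => Nat.cast_nonneg _)
          ((integrable_const _).add (integrable_finsetSum _ fun k _ => hint k))
          (ae_of_all _ (playCount_le_add_sum_indicator_latePulls I i u n))
    _ = u + ∑ k ∈ range n, P.real (latePulls I i u k) := by
        rw [integral_add (integrable_const _) (integrable_finsetSum _ fun k _ => hint k),
          integral_finsetSum _ fun k _ => hint k, integral_const, probReal_univ, one_smul]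
        simp only [integral_indicator_one (measurableSet_latePulls I hI i u _)]

end PlayCount

section Index

def upperDev {Ω : Type*} {K : ℕ} (X : Fin K → ℕ → Ω → ℝ) (i : Fin K) (m η : ℝ) (s : ℕ)
    (z : ℝ) : Set Ω :=
  {ω | (s : ℝ) * empAvg X i s ω - s * m ≥ (s : ℝ) ^ η * z}

def lowerDev {Ω : Type*} {K : ℕ} (X : Fin K → ℕ → Ω → ℝ) (i : Fin K) (m η : ℝ) (s : ℕ)
    (z : ℝ) : Set Ω :=
  {ω | (s : ℝ) * empAvg X i s ω - s * m ≤ -((s : ℝ) ^ η * z)}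

variable {β ξ α η : ℝ}

/-- Number of pulls after which the confidence width `B_{n,s}` drops below half the gap `Δ`. -/
def explorationBound (β ξ α η Δ : ℝ) (n : ℕ) : ℝ :=
  (2 * β ^ (1 / ξ) / Δ) ^ (1 / (1 - η)) * (n : ℝ) ^ (α / (ξ * (1 - η)))

/-- The deviation level `z` at which `s * B_{k,s} = s ^ η * z`. -/
def devLevel (β ξ α : ℝ) (k : ℕ) : ℝ :=
  β ^ (1 / ξ) * (k : ℝ) ^ (α / ξ)

lemma one_le_devLevel (hβ : 1 ≤ β) (hξ : 0 < ξ) (hα : 0 ≤ α) {k : ℕ} (hk : 0 < k) :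
    1 ≤ devLevel β ξ α k :=
  one_le_mul_of_one_le_of_one_le (Real.one_le_rpow hβ (by positivity))
    (Real.one_le_rpow (by exact_mod_cast hk) (by positivity))

lemma div_devLevel_rpow (hβ : 0 < β) (hξ : ξ ≠ 0) (k : ℕ) :
    β / devLevel β ξ α k ^ ξ = (k : ℝ) ^ (-α) := by
  rw [devLevel, Real.mul_rpow (by positivity) (by positivity), ← Real.rpow_mul hβ.le,
    ← Real.rpow_mul (Nat.cast_nonneg k), one_div_mul_cancel hξ, div_mul_cancel₀ α hξ,
    Real.rpow_one, div_mul_cancel_left₀ hβ.ne', Real.rpow_neg (Nat.cast_nonneg k)]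

lemma natCast_mul_bonus (k : ℕ) {s : ℕ} (hs : 0 < s) :
    (s : ℝ) * bonus β ξ α η k s = (s : ℝ) ^ η * devLevel β ξ α k := by
  have hs' : (0 : ℝ) < s := by exact_mod_cast hs
  have hsplit : (s : ℝ) = (s : ℝ) ^ η * (s : ℝ) ^ (1 - η) := by
    rw [← Real.rpow_add hs', add_sub_cancel, Real.rpow_one]
  rw [bonus, devLevel]
  nth_rewrite 1 [hsplit]
  field_simp

lemma bonus_le_bonus (hβ : 0 ≤ β) (hαξ : 0 ≤ α / ξ) {k n : ℕ} (hkn : k ≤ n) (s : ℕ) :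
    bonus β ξ α η k s ≤ bonus β ξ α η n s := by
  unfold bonus
  gcongr

lemma explorationBound_nonneg (hβ : 0 ≤ β) {Δ : ℝ} (hΔ : 0 ≤ Δ) (n : ℕ) :
    0 ≤ explorationBound β ξ α η Δ n := by
  unfold explorationBound
  positivity

lemma natCast_lt_explorationBound (hβ : 0 ≤ β) (hη : η < 1) {Δ : ℝ} (hΔ : 0 < Δ) {n s : ℕ}
    (hs : 0 < s) (h : Δ < 2 * bonus β ξ α η n s) : (s : ℝ) < explorationBound β ξ α η Δ n := by
  have hη' : 0 < 1 - η := sub_pos.2 hη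
  have hs' : (0 : ℝ) < s := by exact_mod_cast hs
  have hpow : (s : ℝ) ^ (1 - η) < 2 * β ^ (1 / ξ) / Δ * (n : ℝ) ^ (α / ξ) := by
    rw [bonus, ← mul_div_assoc, lt_div_iff₀ (by positivity)] at h
    rw [div_mul_eq_mul_div, lt_div_iff₀ hΔ]
    linarith
  have := Real.rpow_lt_rpow (by positivity) hpow (one_div_pos.2 hη')
  rwa [← Real.rpow_mul hs'.le, mul_one_div_cancel hη'.ne', Real.rpow_one,
    Real.mul_rpow (by positivity) (by positivity), ← Real.rpow_mul (Nat.cast_nonneg n),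
    div_mul_div_comm, mul_one] at this

lemma deviation_of_ucbIdx_le {Ω : Type*} {K : ℕ} {X : Fin K → ℕ → Ω → ℝ} {i j : Fin K}
    {s s' k : ℕ} {ω : Ω} (hs : 0 < s) (hs' : 0 < s') (μi μj : ℝ)
    (h : ucbIdx X β ξ α η j s' k ω ≤ ucbIdx X β ξ α η i s k ω) :
    ω ∈ lowerDev X j μj η s' (devLevel β ξ α k) ∨ ω ∈ upperDev X i μi η s (devLevel β ξ α k)
      ∨ μj - μi < 2 * bonus β ξ α η k s := by
  simp only [lowerDev, upperDev, Set.mem_ofPred_eq]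
  rw [← natCast_mul_bonus k hs, ← natCast_mul_bonus k hs']
  by_contra! hcon
  obtain ⟨hj, hi, hgap⟩ := hcon
  have hj' : μj < empAvg X j s' ω + bonus β ξ α η k s' := by
    have : (s' : ℝ) * μj < s' * (empAvg X j s' ω + bonus β ξ α η k s') := by linarith
    exact lt_of_mul_lt_mul_left this (Nat.cast_nonneg s')
  have hi' : empAvg X i s ω < μi + bonus β ξ α η k s := by
    have : (s : ℝ) * empAvg X i s ω < s * (μi + bonus β ξ α η k s) := by linarith
    exact lt_of_mul_lt_mul_left this (Nat.cast_nonneg s)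
  unfold ucbIdx at h
  linarith

lemma ucbIdx_le_of_ucbIdxE_le {Ω : Type*} {K : ℕ} {X : Fin K → ℕ → Ω → ℝ}
    {I : ℕ → Ω → Fin K} {i j : Fin K} {k : ℕ} {ω : Ω}
    (h : ucbIdxE X β ξ α η I j k ω ≤ ucbIdxE X β ξ α η I i k ω) (hi : playCount I i k ω ≠ 0) :
    playCount I j k ω ≠ 0 ∧ ucbIdx X β ξ α η j (playCount I j k ω) k ω
      ≤ ucbIdx X β ξ α η i (playCount I i k ω) k ω := by
  simp only [ucbIdxE, if_neg hi] at h
  by_cases hj : playCount I j k ω = 0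
  · simp [hj] at h
  · simp only [if_neg hj, EReal.coe_le_coe_iff] at h
    exact ⟨hj, h⟩

end Index

section LatePulls

variable {Ω : Type*} {K : ℕ} {X : Fin K → ℕ → Ω → ℝ} {I : ℕ → Ω → Fin K} {β ξ α η μi μj : ℝ}
  {i j : Fin K} {u n : ℕ}

lemma latePulls_eq_empty (hij : i ≠ j) (hu : 0 < u) {k : ℕ} (hk : k < 2)
    (hpol : ∀ ω, ucbIdxE X β ξ α η I j k ω ≤ ucbIdxE X β ξ α η I (I (k + 1) ω) k ω) :
    latePulls I i u k = ∅ := by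
  refine Set.eq_empty_of_forall_notMem fun ω ⟨hpull, hlate⟩ => ?_
  obtain ⟨hs', -⟩ := ucbIdx_le_of_ucbIdxE_le (hpull ▸ hpol ω) (hu.trans_le hlate).ne'
  have := playCount_add_playCount_le I hij k ω
  omega

lemma latePulls_subset_deviations (hβ : 0 ≤ β) (hαξ : 0 ≤ α / ξ) (hη : η < 1) (hΔ : μi < μj)
    (hu : explorationBound β ξ α η (μj - μi) n < u) {k : ℕ} (hkn : k ≤ n)
    (hpol : ∀ ω, ucbIdxE X β ξ α η I j k ω ≤ ucbIdxE X β ξ α η I (I (k + 1) ω) k ω) :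
    latePulls I i u k ⊆ (⋃ s ∈ Icc 1 k, lowerDev X j μj η s (devLevel β ξ α k))
      ∪ ⋃ s ∈ Icc 1 k, upperDev X i μi η s (devLevel β ξ α k) := by
  rintro ω ⟨hpull, hlate⟩
  have hΔ' := sub_pos.2 hΔ
  have hu0 : 0 < u := by exact_mod_cast (explorationBound_nonneg hβ hΔ'.le n).trans_lt hu
  have hs : 0 < playCount I i k ω := hu0.trans_le hlate
  obtain ⟨hs', hle⟩ := ucbIdx_le_of_ucbIdxE_le (hpull ▸ hpol ω) hs.ne'
  rcases deviation_of_ucbIdx_le hs (Nat.pos_of_ne_zero hs') μi μj hle with hdev | hdev | hgap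
  · exact Or.inl (Set.mem_biUnion (mem_Icc.2 ⟨Nat.pos_of_ne_zero hs', playCount_le I j k ω⟩) hdev)
  · exact Or.inr (Set.mem_biUnion (mem_Icc.2 ⟨hs, playCount_le I i k ω⟩) hdev)
  · have hgap' : μj - μi < 2 * bonus β ξ α η n (playCount I i k ω) :=
      hgap.trans_le (by gcongr; exact bonus_le_bonus hβ hαξ hkn _)
    have hlate' : (u : ℝ) ≤ playCount I i k ω := by exact_mod_cast hlate
    linarith [natCast_lt_explorationBound hβ hη hΔ' hs hgap']

lemma measure_latePulls_le [MeasurableSpace Ω] (P : Measure Ω) (hβ : 1 ≤ β) (hξ : 0 < ξ)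
    (hα : 0 ≤ α) (hη : η < 1) (hΔ : μi < μj) (hu : explorationBound β ξ α η (μj - μi) n < u)
    {k : ℕ} (hk : 0 < k) (hkn : k ≤ n)
    (hpol : ∀ ω, ucbIdxE X β ξ α η I j k ω ≤ ucbIdxE X β ξ α η I (I (k + 1) ω) k ω)
    (hconc_j : ∀ s : ℕ, 1 ≤ s → ∀ z : ℝ, 1 ≤ z →
      P (lowerDev X j μj η s z) ≤ ENNReal.ofReal (β / z ^ ξ))
    (hconc_i : ∀ s : ℕ, 1 ≤ s → ∀ z : ℝ, 1 ≤ z →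
      P (upperDev X i μi η s z) ≤ ENNReal.ofReal (β / z ^ ξ)) :
    P (latePulls I i u k) ≤ ENNReal.ofReal (2 * (k : ℝ) ^ (1 - α)) := by
  have hz := one_le_devLevel hβ hξ hα hk
  have hunion : ∀ A : ℕ → Set Ω, (∀ s ∈ Icc 1 k, P (A s) ≤ ENNReal.ofReal (k ^ (-α))) →
      P (⋃ s ∈ Icc 1 k, A s) ≤ ENNReal.ofReal ((k : ℝ) ^ (1 - α)) := fun A hA =>
    calc P (⋃ s ∈ Icc 1 k, A s) ≤ ∑ s ∈ Icc 1 k, P (A s) := measure_biUnion_finset_le _ _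
      _ ≤ ∑ s ∈ Icc 1 k, ENNReal.ofReal (k ^ (-α)) := sum_le_sum hA
      _ = ENNReal.ofReal ((k : ℝ) ^ (1 - α)) := by
        rw [sum_const, Nat.card_Icc, add_tsub_cancel_right, nsmul_eq_mul, ← ENNReal.ofReal_natCast,
          ← ENNReal.ofReal_mul (Nat.cast_nonneg k), sub_eq_add_neg,
          Real.rpow_add (by exact_mod_cast hk), Real.rpow_one]
  have hdev : β / devLevel β ξ α k ^ ξ = (k : ℝ) ^ (-α) :=
    div_devLevel_rpow (by linarith) hξ.ne' k
  calc P (latePulls I i u k)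
      ≤ P ((⋃ s ∈ Icc 1 k, lowerDev X j μj η s (devLevel β ξ α k))
          ∪ ⋃ s ∈ Icc 1 k, upperDev X i μi η s (devLevel β ξ α k)) :=
        measure_mono (latePulls_subset_deviations (by linarith) (by positivity) hη hΔ hu hkn hpol)
    _ ≤ ENNReal.ofReal ((k : ℝ) ^ (1 - α)) + ENNReal.ofReal ((k : ℝ) ^ (1 - α)) :=
        (measure_union_le _ _).trans (add_le_add
          (hunion _ fun s hs => hdev ▸ hconc_j s (mem_Icc.1 hs).1 _ hz)
          (hunion _ fun s hs => hdev ▸ hconc_i s (mem_Icc.1 hs).1 _ hz))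
    _ = ENNReal.ofReal (2 * (k : ℝ) ^ (1 - α)) := by
        rw [← ENNReal.ofReal_add (by positivity) (by positivity), two_mul]

lemma sum_measureReal_latePulls_le [MeasurableSpace Ω] (P : Measure Ω) (hβ : 1 ≤ β)
    (hξ : 0 < ξ) (hα : 2 < α) (hη : η < 1) (hΔ : μi < μj) (hij : i ≠ j)
    (hu : explorationBound β ξ α η (μj - μi) n < u)
    (hpol : ∀ k ω, ucbIdxE X β ξ α η I j k ω ≤ ucbIdxE X β ξ α η I (I (k + 1) ω) k ω)
    (hconc_j : ∀ s : ℕ, 1 ≤ s → ∀ z : ℝ, 1 ≤ z →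
      P (lowerDev X j μj η s z) ≤ ENNReal.ofReal (β / z ^ ξ))
    (hconc_i : ∀ s : ℕ, 1 ≤ s → ∀ z : ℝ, 1 ≤ z →
      P (upperDev X i μi η s z) ≤ ENNReal.ofReal (β / z ^ ξ)) :
    ∑ k ∈ range n, P.real (latePulls I i u k) ≤ 2 / (α - 2) := by
  have hu0 : 0 < u := by
    exact_mod_cast ((explorationBound_nonneg (by linarith) (sub_pos.2 hΔ).le n).trans_lt hu)
  have hsub : ∑ k ∈ Ico 2 n, P.real (latePulls I i u k)
      = ∑ k ∈ range n, P.real (latePulls I i u k) :=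
    sum_subset (fun k hk => mem_range.2 (mem_Ico.1 hk).2) fun k hk hk' => by
      rw [latePulls_eq_empty hij hu0 (by simp_all) (hpol k), measureReal_empty]
  rw [← hsub]
  calc ∑ k ∈ Ico 2 n, P.real (latePulls I i u k)
      ≤ ∑ k ∈ Ico 2 n, 2 * (k : ℝ) ^ (-(α - 1)) := sum_le_sum fun k hk => by
        rw [neg_sub]
        exact ENNReal.toReal_le_of_le_ofReal (by positivity) (measure_latePulls_le P hβ hξ
          (by linarith) hη hΔ hu (by linarith [(mem_Ico.1 hk).1]) (mem_Ico.1 hk).2.le (hpol k)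
          hconc_j hconc_i)
    _ ≤ 2 * ((1 : ℕ) ^ (1 - (α - 1)) / (α - 1 - 1)) := by
        rw [← mul_sum]
        gcongr
        exact sum_Ico_rpow_neg_le (by linarith) one_pos n
    _ = 2 / (α - 2) := by
        rw [Nat.cast_one, Real.one_rpow]
        ring

end LatePulls

theorem ucb_expected_suboptimal_plays_general
    {Ω : Type*} [MeasurableSpace Ω] (P : Measure Ω) [IsProbabilityMeasure P]
    (K : ℕ)
    (X : Fin K → ℕ → Ω → ℝ)
    (μ : Fin K → ℝ)
    (β ξ η α : ℝ) (hβ : 1 < β) (hξ : 0 < ξ) (hη' : η < 1)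
    (hα2 : 2 < α)
    (hconc : ∀ i : Fin K, ∀ n : ℕ, 1 ≤ n → ∀ z : ℝ, 1 ≤ z →
      P {ω | (n : ℝ) * empAvg X i n ω - n * μ i ≥ (n : ℝ) ^ η * z}
        ≤ ENNReal.ofReal (β / z ^ ξ) ∧
      P {ω | (n : ℝ) * empAvg X i n ω - n * μ i ≤ -((n : ℝ) ^ η * z)}
        ≤ ENNReal.ofReal (β / z ^ ξ))
    (istar : Fin K) (hopt : ∀ j, j ≠ istar → μ j < μ istar)
    (I : ℕ → Ω → Fin K)
    (hImeas : ∀ t, Measurable (I t))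
    (hPolicy : ∀ t : ℕ, 1 ≤ t → ∀ ω : Ω, ∀ j : Fin K,
      ucbIdxE X β ξ α η I j (t - 1) ω ≤ ucbIdxE X β ξ α η I (I t ω) (t - 1) ω)
    (i : Fin K) (hi : i ≠ istar) (n : ℕ) :
    ∫ ω, (playCount I i n ω : ℝ) ∂P
      ≤ (2 * β ^ (1 / ξ) / (μ istar - μ i)) ^ (1 / (1 - η)) * (n : ℝ) ^ (α / (ξ * (1 - η)))
        + 2 / (α - 2) + 1 := by
  set A := explorationBound β ξ α η (μ istar - μ i) n
  have hA : 0 ≤ A := explorationBound_nonneg (by linarith) (sub_pos.2 (hopt i hi)).le n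
  have hpol : ∀ k ω, ucbIdxE X β ξ α η I istar k ω ≤ ucbIdxE X β ξ α η I (I (k + 1) ω) k ω :=
    fun k ω => hPolicy (k + 1) k.succ_pos ω istar
  have hsum := sum_measureReal_latePulls_le P hβ.le hξ hα2 hη' (hopt i hi) hi
    (u := ⌊A⌋₊ + 1) (by push_cast; exact Nat.lt_floor_add_one A) hpol
    (fun s hs z hz => (hconc istar s hs z hz).2)
    (fun s hs z hz => (hconc i s hs z hz).1)
  calc ∫ ω, (playCount I i n ω : ℝ) ∂P
      ≤ ((⌊A⌋₊ + 1 : ℕ) : ℝ) + ∑ k ∈ range n, P.real (latePulls I i (⌊A⌋₊ + 1) k) :=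
        integral_playCount_le I P hImeas i _ n
    _ ≤ A + 2 / (α - 2) + 1 := by
        push_cast
        linarith [Nat.floor_le hA]

/-- Under `ξη(1−η) ≤ α < ξ(1−η)` and `α > 2`, the expected number of plays of a
sub-optimal arm `i ≠ i*` in the first `n` rounds satisfies
`E[T_i(n)] ≤ (2β^{1/ξ}/Δ_i)^{1/(1−η)} n^{α/(ξ(1−η))} + 2/(α−2) + 1`. -/
theorem ucb_expected_suboptimal_plays
    {Ω : Type*} [MeasurableSpace Ω] (P : Measure Ω) [IsProbabilityMeasure P]
    (K : ℕ) (hK : 2 ≤ K) (R : ℝ) (hR : 0 < R)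
    (X : Fin K → ℕ → Ω → ℝ)
    (hXmeas : ∀ i t, Measurable (X i t))
    (hXbdd : ∀ i t ω, |X i t ω| ≤ R)
    (μ : Fin K → ℝ)
    (hconv : ∀ i, Filter.Tendsto (fun n => ∫ ω, empAvg X i n ω ∂P)
      Filter.atTop (nhds (μ i)))
    (β ξ η α : ℝ) (hβ : 1 < β) (hξ : 0 < ξ) (hη : 1 / 2 ≤ η) (hη' : η < 1)
    (hα2 : 2 < α) (hαlow : ξ * η * (1 - η) ≤ α) (hαhigh : α < ξ * (1 - η))
    (hconc : ∀ i : Fin K, ∀ n : ℕ, 1 ≤ n → ∀ z : ℝ, 1 ≤ z →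
      P {ω | (n : ℝ) * empAvg X i n ω - n * μ i ≥ (n : ℝ) ^ η * z}
        ≤ ENNReal.ofReal (β / z ^ ξ) ∧
      P {ω | (n : ℝ) * empAvg X i n ω - n * μ i ≤ -((n : ℝ) ^ η * z)}
        ≤ ENNReal.ofReal (β / z ^ ξ))
    (istar : Fin K) (hopt : ∀ j, j ≠ istar → μ j < μ istar)
    (I : ℕ → Ω → Fin K)
    (hImeas : ∀ t, Measurable (I t))
    (hPolicy : ∀ t : ℕ, 1 ≤ t → ∀ ω : Ω, ∀ j : Fin K,
      ucbIdxE X β ξ α η I j (t - 1) ω ≤ ucbIdxE X β ξ α η I (I t ω) (t - 1) ω)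
    (i : Fin K) (hi : i ≠ istar) (n : ℕ) (hn : 1 ≤ n) :
    ∫ ω, (playCount I i n ω : ℝ) ∂P
      ≤ (2 * β ^ (1 / ξ) / (μ istar - μ i)) ^ (1 / (1 - η)) * (n : ℝ) ^ (α / (ξ * (1 - η)))
        + 2 / (α - 2) + 1 :=
  ucb_expected_suboptimal_plays_general P K X μ β ξ η α hβ hξ hη' hα2 hconc istar hopt I hImeas
    hPolicy i hi n
end
end

section
/- (Lemma 4.) Let (X_i)_{i≥1} be i.i.d. real random variables taking values in [−B, B] for some B > 0, independent of the sequence (Y_i)_{i≥1}, and suppose (Y_i) satisfies: (Convergence) lim_{n→∞} E[Ȳ_n] = μ_Y where Ȳ_n = (1/n)∑_{i=1}^n Y_i; (Concentration) there are constants β > 1, ξ > 0, 1/2 ≤ η < 1 such that for all integers n ≥ 1 and reals z ≥ 1, P(n Ȳ_n − n μ_Y ≥ n^η z) ≤ β/z^ξ and P(n Ȳ_n − n μ_Y ≤ −n^η z) ≤ β/z^ξ. Let ρ > 0 and Z_i = X_i + ρ Y_i, with Z̄_n = (1/n)∑_{i=1}^n Z_i and μ_X = E[X_1]. Then: (A)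 lim_{n→∞} E[Z̄_n] = μ_X + ρ μ_Y; and (B) there exists a constant β' > 1, depending only on ρ, ξ, β and B, such that for all integers n ≥ 1 and reals z ≥ 1, P(n Z̄_n − n(μ_X + ρ μ_Y) ≥ n^η z) ≤ β'/z^ξ and P(n Z̄_n − n(μ_X + ρ μ_Y) ≤ −n^η z) ≤ β'/z^ξ. -/
open MeasureTheory ProbabilityTheory Finset Real
open scoped NNReal Nat

/-!
Write `n Z̄ₙ - n (μ_X + ρ μ_Y) = ∑ (Xᵢ - μ_X) + ρ (∑ Yᵢ - n μ_Y)` and divide by `n ^ η`.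
Since `n ^ η ≥ √n`, Hoeffding's inequality gives the first term a Gaussian tail
`exp (-z² / 2c)` uniformly in `n`, and a Gaussian tail is dominated by `K / z ^ ξ`; the second
term has a polynomial tail by assumption. Polynomial tails with constant `K ≥ 1` are stable
under multiplication by `ρ > 0` and, by splitting the deviation `z` into halves, under addition.
Lower tails are the upper tails of `-X` and `-Y`.
-/

lemma exp_neg_div_le_div_rpow {a ξ z : ℝ} (ha : 0 < a) (hz : 1 ≤ z) :
    exp (-(z / a)) ≤ ⌈ξ⌉₊ ! * a ^ ⌈ξ⌉₊ / z ^ ξ := by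
  set k := ⌈ξ⌉₊
  have hz0 : 0 < z := by linarith
  calc exp (-(z / a)) = (exp (z / a))⁻¹ := exp_neg _
    _ ≤ ((z / a) ^ k / k !)⁻¹ :=
        inv_anti₀ (by positivity) (pow_div_factorial_le_exp _ (by positivity) k)
    _ = k ! * a ^ k / z ^ (k : ℝ) := by rw [rpow_natCast, inv_div, div_pow]; field_simp
    _ ≤ k ! * a ^ k / z ^ ξ := by
        gcongr
        exact Nat.le_ceil ξ

section

variable {Ω : Type*}

noncomputable def partialSumDeviation (Y : ℕ → Ω → ℝ) (μ η : ℝ) (n : ℕ) (ω : Ω) : ℝ :=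
  (∑ i ∈ range n, Y i ω - n * μ) / (n : ℝ) ^ η

lemma partialSumDeviation_eq_add_const_mul {X Y Z : ℕ → Ω → ℝ} {μX μY μ ρ η : ℝ}
    (hZ : ∀ i ω, Z i ω = X i ω + ρ * Y i ω) (hμ : μ = μX + ρ * μY) (n : ℕ) :
    partialSumDeviation Z μ η n
      = partialSumDeviation X μX η n + fun ω => ρ * partialSumDeviation Y μY η n ω := by
  ext ω
  simp only [partialSumDeviation, Pi.add_apply, hZ, hμ, sum_add_distrib, ← mul_sum]
  ring

lemma setOf_ge_eq_setOf_le_partialSumDeviation {Y : ℕ → Ω → ℝ} {μ η z : ℝ} {n : ℕ}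
    (hn : 1 ≤ n) :
    {ω | (n : ℝ) * ((∑ i ∈ range n, Y i ω) / n) - n * μ ≥ (n : ℝ) ^ η * z}
      = {ω | z ≤ partialSumDeviation Y μ η n ω} := by
  have hn0 : (n : ℝ) ≠ 0 := by positivity
  ext ω
  simp only [Set.mem_ofPred_eq, ge_iff_le, partialSumDeviation, mul_div_cancel₀ _ hn0,
    le_div_iff₀ (by positivity : (0 : ℝ) < n ^ η), mul_comm z]

lemma setOf_le_neg_eq_setOf_le_partialSumDeviation_neg {Y : ℕ → Ω → ℝ} {μ η z : ℝ} {n : ℕ}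
    (hn : 1 ≤ n) :
    {ω | (n : ℝ) * ((∑ i ∈ range n, Y i ω) / n) - n * μ ≤ -((n : ℝ) ^ η * z)}
      = {ω | z ≤ partialSumDeviation (fun i ω => -Y i ω) (-μ) η n ω} := by
  have hn0 : (n : ℝ) ≠ 0 := by positivity
  ext ω
  simp only [Set.mem_ofPred_eq, partialSumDeviation, mul_div_cancel₀ _ hn0,
    le_div_iff₀ (by positivity : (0 : ℝ) < n ^ η), sum_neg_distrib]
  constructor <;> intro h <;> linarith

variable [MeasurableSpace Ω] {P : Measure Ω}

def HasPolyUpperTail (P : Measure Ω) (T : Ω → ℝ) (K ξ : ℝ) : Prop :=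
  ∀ z : ℝ, 1 ≤ z → P {ω | z ≤ T ω} ≤ ENNReal.ofReal (K / z ^ ξ)

lemma forall_measure_deviation_le_iff {Y : ℕ → Ω → ℝ} {μ η K ξ : ℝ} {n : ℕ} (hn : 1 ≤ n) :
    (∀ z : ℝ, 1 ≤ z →
      P {ω | (n : ℝ) * ((∑ i ∈ range n, Y i ω) / n) - n * μ ≥ (n : ℝ) ^ η * z}
        ≤ ENNReal.ofReal (K / z ^ ξ) ∧
      P {ω | (n : ℝ) * ((∑ i ∈ range n, Y i ω) / n) - n * μ ≤ -((n : ℝ) ^ η * z)}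
        ≤ ENNReal.ofReal (K / z ^ ξ)) ↔
    HasPolyUpperTail P (partialSumDeviation Y μ η n) K ξ ∧
      HasPolyUpperTail P (partialSumDeviation (fun i ω => -Y i ω) (-μ) η n) K ξ := by
  simp only [HasPolyUpperTail, setOf_ge_eq_setOf_le_partialSumDeviation hn,
    setOf_le_neg_eq_setOf_le_partialSumDeviation_neg hn, forall_and]

namespace HasPolyUpperTail

variable {T U : Ω → ℝ} {K L ξ : ℝ}

lemma const_mul [IsProbabilityMeasure P] (hT : HasPolyUpperTail P T K ξ) (hK : 1 ≤ K)
    (hξ : 0 ≤ ξ) {c : ℝ} (hc : 0 < c) :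
    HasPolyUpperTail P (fun ω => c * T ω) (K * max 1 c ^ ξ) ξ := by
  intro z hz
  have hcmax : c ^ ξ ≤ max 1 c ^ ξ := rpow_le_rpow hc.le (le_max_right _ _) hξ
  by_cases hzc : 1 ≤ z / c
  · have hset : {ω | z ≤ c * T ω} = {ω | z / c ≤ T ω} := by
      ext ω
      simp only [Set.mem_ofPred_eq, div_le_iff₀' hc]
    rw [hset]
    refine (hT _ hzc).trans (ENNReal.ofReal_le_ofReal ?_)
    rw [div_rpow (by positivity) hc.le, div_div_eq_mul_div]
    gcongr
  · have hzc' : z ≤ c := ((div_lt_one hc).1 (not_le.1 hzc)).le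
    refine prob_le_one.trans ?_
    rw [← ENNReal.ofReal_one]
    refine ENNReal.ofReal_le_ofReal ((one_le_div (by positivity)).2 ?_)
    calc z ^ ξ ≤ c ^ ξ := rpow_le_rpow (by linarith) hzc' hξ
      _ ≤ max 1 c ^ ξ := hcmax
      _ ≤ K * max 1 c ^ ξ := le_mul_of_one_le_left (by positivity) hK

lemma add [IsProbabilityMeasure P] (hT : HasPolyUpperTail P T K ξ)
    (hU : HasPolyUpperTail P U L ξ) (hK : 1 ≤ K) (hL : 1 ≤ L) (hξ : 0 ≤ ξ) :
    HasPolyUpperTail P (T + U) (2 ^ ξ * (K + L)) ξ := by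
  intro z hz
  have hT2 := hT.const_mul hK hξ two_pos z hz
  have hU2 := hU.const_mul hL hξ two_pos z hz
  rw [max_eq_right one_le_two] at hT2 hU2
  calc P {ω | z ≤ (T + U) ω} ≤ P ({ω | z ≤ 2 * T ω} ∪ {ω | z ≤ 2 * U ω}) := by
        refine measure_mono fun ω hω => ?_
        by_contra h
        simp only [Set.mem_union, Set.mem_ofPred_eq, Pi.add_apply, not_or, not_le] at h hω
        linarith
    _ ≤ P {ω | z ≤ 2 * T ω} + P {ω | z ≤ 2 * U ω} := measure_union_le _ _
    _ ≤ ENNReal.ofReal (K * 2 ^ ξ / z ^ ξ) + ENNReal.ofReal (L * 2 ^ ξ / z ^ ξ) :=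
        add_le_add hT2 hU2
    _ = ENNReal.ofReal (2 ^ ξ * (K + L) / z ^ ξ) := by
        have hzξ : 0 < z ^ ξ := by positivity
        rw [← ENNReal.ofReal_add (by positivity [hK.trans' zero_le_one])
          (by positivity [hL.trans' zero_le_one])]
        ring_nf

end HasPolyUpperTail

lemma measure_le_sum_div_rpow_le_exp [IsProbabilityMeasure P] {W : ℕ → Ω → ℝ}
    (hind : iIndepFun W P) {c : ℝ≥0} (hW : ∀ i, HasSubgaussianMGF (W i) c P) {η : ℝ}
    (hη : 1 / 2 ≤ η) {n : ℕ} (hn : 1 ≤ n) {z : ℝ} (hz : 0 ≤ z) :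
    P {ω | z ≤ (∑ i ∈ range n, W i ω) / (n : ℝ) ^ η}
      ≤ ENNReal.ofReal (exp (-z ^ 2 / (2 * c))) := by
  have hn1 : (1 : ℝ) ≤ n := by exact_mod_cast hn
  have hnη : 0 < (n : ℝ) ^ η := by positivity
  have hset : {ω | z ≤ (∑ i ∈ range n, W i ω) / (n : ℝ) ^ η}
      = {ω | (n : ℝ) ^ η * z ≤ ∑ i ∈ range n, W i ω} := by
    ext ω
    simp only [Set.mem_ofPred_eq, le_div_iff₀ hnη, mul_comm]
  have hpow : (n : ℝ) ≤ ((n : ℝ) ^ η) ^ 2 := by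
    rw [← rpow_natCast, ← rpow_mul (by positivity)]
    simpa using
      rpow_le_rpow_of_exponent_le hn1 (show (1 : ℝ) ≤ η * (2 : ℕ) by push_cast; linarith)
  rw [hset, ← ofReal_measureReal]
  refine ENNReal.ofReal_le_ofReal
    ((HasSubgaussianMGF.measure_sum_range_ge_le_of_iIndepFun hind (fun i _ => hW i)
      (by positivity)).trans ?_)
  gcongr exp ?_
  rw [neg_div, neg_div, neg_le_neg_iff]
  calc z ^ 2 / (2 * c) = n * z ^ 2 / (2 * n * c) := by
        rw [show (2 * n * c : ℝ) = n * (2 * c) by ring, mul_div_mul_left _ _ (by positivity)]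
    _ ≤ ((n : ℝ) ^ η) ^ 2 * z ^ 2 / (2 * n * c) := by gcongr
    _ = ((n : ℝ) ^ η * z) ^ 2 / (2 * n * c) := by ring

lemma hasPolyUpperTail_partialSumDeviation_of_mem_Icc [IsProbabilityMeasure P]
    {X : ℕ → Ω → ℝ} {a b μ : ℝ} (hab : a < b) (hmeas : ∀ i, Measurable (X i))
    (hbdd : ∀ i ω, X i ω ∈ Set.Icc a b) (hind : iIndepFun X P)
    (hmean : ∀ i, ∫ ω, X i ω ∂P = μ) (ξ : ℝ) {η : ℝ} (hη : 1 / 2 ≤ η) {n : ℕ} (hn : 1 ≤ n) :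
    HasPolyUpperTail P (partialSumDeviation X μ η n)
      (max 1 (⌈ξ⌉₊ ! * ((b - a) ^ 2 / 2) ^ ⌈ξ⌉₊)) ξ := by
  set c : ℝ≥0 := (‖b - a‖₊ / 2) ^ 2
  have hc : (2 * c : ℝ) = (b - a) ^ 2 / 2 := by
    simp only [c, NNReal.coe_pow, NNReal.coe_div, coe_nnnorm, norm_eq_abs,
      abs_of_pos (sub_pos.2 hab), NNReal.coe_ofNat]
    ring
  have hc0 : (0 : ℝ) < (b - a) ^ 2 / 2 := by have := sub_pos.2 hab; positivity
  have hsub : ∀ i, HasSubgaussianMGF (fun ω => X i ω - μ) c P := fun i => by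
    simpa [hmean i] using
      hasSubgaussianMGF_of_mem_Icc (μ := P) (hmeas i).aemeasurable (ae_of_all _ (hbdd i))
  have hcentered : iIndepFun (fun i ω => X i ω - μ) P :=
    hind.comp (fun _ x => x - μ) (fun _ => by fun_prop)
  have hdev : partialSumDeviation X μ η n
      = fun ω => (∑ i ∈ range n, (X i ω - μ)) / (n : ℝ) ^ η := by
    ext ω
    simp [partialSumDeviation, sum_sub_distrib]
  intro z hz
  rw [hdev]
  refine (measure_le_sum_div_rpow_le_exp hcentered hsub hη hn (by linarith)).trans
    (ENNReal.ofReal_le_ofReal ?_)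
  calc exp (-z ^ 2 / (2 * c)) ≤ exp (-(z / (2 * c))) := by
        rw [hc, neg_div]
        gcongr
        nlinarith
    _ ≤ ⌈ξ⌉₊ ! * ((b - a) ^ 2 / 2) ^ ⌈ξ⌉₊ / z ^ ξ := by
        rw [hc]
        exact exp_neg_div_le_div_rpow hc0 hz
    _ ≤ max 1 (⌈ξ⌉₊ ! * ((b - a) ^ 2 / 2) ^ ⌈ξ⌉₊) / z ^ ξ := by
        gcongr
        exact le_max_right _ _

lemma hasPolyUpperTail_partialSumDeviation_neg_of_mem_Icc [IsProbabilityMeasure P]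
    {X : ℕ → Ω → ℝ} {a b μ : ℝ} (hab : a < b) (hmeas : ∀ i, Measurable (X i))
    (hbdd : ∀ i ω, X i ω ∈ Set.Icc a b) (hind : iIndepFun X P)
    (hmean : ∀ i, ∫ ω, X i ω ∂P = μ) (ξ : ℝ) {η : ℝ} (hη : 1 / 2 ≤ η) {n : ℕ} (hn : 1 ≤ n) :
    HasPolyUpperTail P (partialSumDeviation (fun i ω => -X i ω) (-μ) η n)
      (max 1 (⌈ξ⌉₊ ! * ((b - a) ^ 2 / 2) ^ ⌈ξ⌉₊)) ξ := by
  have h := hasPolyUpperTail_partialSumDeviation_of_mem_Icc (X := fun i ω => -X i ω)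
    (neg_lt_neg hab) (fun i => (hmeas i).neg)
    (fun i ω => ⟨neg_le_neg (hbdd i ω).2, neg_le_neg (hbdd i ω).1⟩)
    (hind.comp (fun _ x => -x) (fun _ => measurable_neg))
    (fun i => by rw [integral_neg, hmean]) ξ hη hn
  rwa [show -a - -b = b - a by ring] at h

lemma hasPolyUpperTail_partialSumDeviation_of_eq_add_const_mul [IsProbabilityMeasure P]
    {X Y Z : ℕ → Ω → ℝ} {μX μY μ ρ η K L ξ : ℝ} {n : ℕ}
    (hX : HasPolyUpperTail P (partialSumDeviation X μX η n) K ξ)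
    (hY : HasPolyUpperTail P (partialSumDeviation Y μY η n) L ξ) (hK : 1 ≤ K) (hL : 1 ≤ L)
    (hξ : 0 ≤ ξ) (hρ : 0 < ρ) (hZ : ∀ i ω, Z i ω = X i ω + ρ * Y i ω) (hμ : μ = μX + ρ * μY) :
    HasPolyUpperTail P (partialSumDeviation Z μ η n) (2 ^ ξ * (K + L * max 1 ρ ^ ξ)) ξ := by
  rw [partialSumDeviation_eq_add_const_mul hZ hμ]
  exact hX.add (hY.const_mul hL hξ hρ) hK (one_le_mul_of_one_le_of_one_le hL
    (one_le_rpow (le_max_left _ _) hξ)) hξ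

lemma integral_sum_add_const_mul_div [IsProbabilityMeasure P] {X Y : ℕ → Ω → ℝ} {μ : ℝ}
    (hX : ∀ i, Integrable (X i) P) (hY : ∀ i, Integrable (Y i) P)
    (hmean : ∀ i, ∫ ω, X i ω ∂P = μ) (ρ : ℝ) {n : ℕ} (hn : n ≠ 0) :
    ∫ ω, (∑ i ∈ range n, (X i ω + ρ * Y i ω)) / n ∂P
      = μ + ρ * ∫ ω, (∑ i ∈ range n, Y i ω) / n ∂P := by
  have hZ : ∀ i ∈ range n, Integrable (fun ω => X i ω + ρ * Y i ω) P :=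
    fun i _ => (hX i).add ((hY i).const_mul ρ)
  have hterm : ∀ i ∈ range n, ∫ ω, (X i ω + ρ * Y i ω) ∂P = μ + ρ * ∫ ω, Y i ω ∂P :=
    fun i _ => by rw [integral_add (hX i) ((hY i).const_mul ρ), integral_const_mul, hmean i]
  rw [integral_div, integral_div, integral_finsetSum _ hZ,
    integral_finsetSum _ (fun i _ => hY i), sum_congr rfl hterm, sum_add_distrib, sum_const,
    card_range, nsmul_eq_mul, ← mul_sum]
  field_simp

end

theorem sum_iid_plus_concentrated_sequence_general
    {Ω : Type*} [MeasurableSpace Ω] (P : Measure Ω) [IsProbabilityMeasure P]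
    (B : ℝ) (hB : 0 < B)
    (X Y : ℕ → Ω → ℝ)
    (hXmeas : ∀ i, Measurable (X i))
    (hXbdd : ∀ i ω, X i ω ∈ Set.Icc (-B) B)
    (hXiid : iIndepFun X P)
    (hXident : ∀ i, IdentDistrib (X i) (X 0) P P)
    (hYint : ∀ i, Integrable (Y i) P)
    (μY : ℝ)
    (hYconv : Filter.Tendsto
      (fun n : ℕ => ∫ ω, (∑ i ∈ Finset.range n, Y i ω) / n ∂P) Filter.atTop (nhds μY))
    (β ξ η : ℝ) (hβ : 1 < β) (hξ : 0 < ξ) (hη : 1 / 2 ≤ η)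
    (hYconc : ∀ n : ℕ, 1 ≤ n → ∀ z : ℝ, 1 ≤ z →
      P {ω | (n : ℝ) * ((∑ i ∈ Finset.range n, Y i ω) / n) - n * μY ≥ (n : ℝ) ^ η * z}
        ≤ ENNReal.ofReal (β / z ^ ξ) ∧
      P {ω | (n : ℝ) * ((∑ i ∈ Finset.range n, Y i ω) / n) - n * μY ≤ -((n : ℝ) ^ η * z)}
        ≤ ENNReal.ofReal (β / z ^ ξ))
    (ρ : ℝ) (hρ : 0 < ρ) :
    Filter.Tendsto
      (fun n : ℕ => ∫ ω, (∑ i ∈ Finset.range n, (X i ω + ρ * Y i ω)) / n ∂P)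
      Filter.atTop (nhds ((∫ ω, X 0 ω ∂P) + ρ * μY)) ∧
    ∃ β' : ℝ, 1 < β' ∧ ∀ n : ℕ, 1 ≤ n → ∀ z : ℝ, 1 ≤ z →
      P {ω | (n : ℝ) * ((∑ i ∈ Finset.range n, (X i ω + ρ * Y i ω)) / n)
            - n * ((∫ ω', X 0 ω' ∂P) + ρ * μY) ≥ (n : ℝ) ^ η * z}
        ≤ ENNReal.ofReal (β' / z ^ ξ) ∧
      P {ω | (n : ℝ) * ((∑ i ∈ Finset.range n, (X i ω + ρ * Y i ω)) / n)
            - n * ((∫ ω', X 0 ω' ∂P) + ρ * μY) ≤ -((n : ℝ) ^ η * z)}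
        ≤ ENNReal.ofReal (β' / z ^ ξ) := by
  set μX := ∫ ω, X 0 ω ∂P
  have hmean : ∀ i, ∫ ω, X i ω ∂P = μX := fun i => (hXident i).integral_eq
  refine ⟨?_, ?_⟩
  · have hXint : ∀ i, Integrable (X i) P := fun i =>
      Integrable.of_mem_Icc (-B) B (hXmeas i).aemeasurable (ae_of_all _ (hXbdd i))
    refine (tendsto_const_nhds.add (hYconv.const_mul ρ)).congr' ?_
    filter_upwards [Filter.eventually_ne_atTop 0] with n hn
    exact (integral_sum_add_const_mul_div hXint hYint hmean ρ hn).symm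
  set K := max 1 (⌈ξ⌉₊ ! * ((B - -B) ^ 2 / 2) ^ ⌈ξ⌉₊)
  have hK : 1 ≤ K := le_max_left _ _
  refine ⟨2 ^ ξ * (K + β * max 1 ρ ^ ξ), ?_, fun n hn => ?_⟩
  · have hβρ : 1 ≤ β * max 1 ρ ^ ξ :=
      one_le_mul_of_one_le_of_one_le hβ.le (one_le_rpow (le_max_left _ _) hξ.le)
    calc (1 : ℝ) < K + β * max 1 ρ ^ ξ := by linarith
      _ ≤ 2 ^ ξ * (K + β * max 1 ρ ^ ξ) :=
        le_mul_of_one_le_left (by linarith) (one_le_rpow one_le_two hξ.le)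
  have hXup := hasPolyUpperTail_partialSumDeviation_of_mem_Icc (by linarith) hXmeas hXbdd
    hXiid hmean ξ hη hn
  have hXlow := hasPolyUpperTail_partialSumDeviation_neg_of_mem_Icc (by linarith) hXmeas hXbdd
    hXiid hmean ξ hη hn
  obtain ⟨hYup, hYlow⟩ := (forall_measure_deviation_le_iff hn).1 (hYconc n hn)
  exact (forall_measure_deviation_le_iff hn).2
    ⟨hasPolyUpperTail_partialSumDeviation_of_eq_add_const_mul hXup hYup hK hβ.le hξ.le hρ
      (fun _ _ => rfl) rfl,
    hasPolyUpperTail_partialSumDeviation_of_eq_add_const_mul hXlow hYlow hK hβ.le hξ.le hρ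
      (fun _ _ => by ring) (by ring)⟩

/-- Lemma 4: if `(X_i)` are i.i.d. bounded random variables, independent of a sequence `(Y_i)`
whose running averages converge in mean to `μ_Y` and concentrate polynomially, then the
sequence `Z_i = X_i + ρ Y_i` has the same convergence and (polynomial) concentration
properties around `μ_X + ρ μ_Y`. -/
theorem sum_iid_plus_concentrated_sequence
    {Ω : Type*} [MeasurableSpace Ω] (P : Measure Ω) [IsProbabilityMeasure P]
    (B : ℝ) (hB : 0 < B)
    (X Y : ℕ → Ω → ℝ)
    (hXmeas : ∀ i, Measurable (X i))
    (hXbdd : ∀ i ω, X i ω ∈ Set.Icc (-B) B)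
    (hXiid : iIndepFun X P)
    (hXident : ∀ i, IdentDistrib (X i) (X 0) P P)
    (hYmeas : ∀ i, Measurable (Y i))
    (hYint : ∀ i, Integrable (Y i) P)
    (hXY : IndepFun (fun ω => fun i => X i ω) (fun ω => fun i => Y i ω) P)
    (μY : ℝ)
    (hYconv : Filter.Tendsto
      (fun n : ℕ => ∫ ω, (∑ i ∈ Finset.range n, Y i ω) / n ∂P) Filter.atTop (nhds μY))
    (β ξ η : ℝ) (hβ : 1 < β) (hξ : 0 < ξ) (hη : 1 / 2 ≤ η) (hη' : η < 1)
    (hYconc : ∀ n : ℕ, 1 ≤ n → ∀ z : ℝ, 1 ≤ z →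
      P {ω | (n : ℝ) * ((∑ i ∈ Finset.range n, Y i ω) / n) - n * μY ≥ (n : ℝ) ^ η * z}
        ≤ ENNReal.ofReal (β / z ^ ξ) ∧
      P {ω | (n : ℝ) * ((∑ i ∈ Finset.range n, Y i ω) / n) - n * μY ≤ -((n : ℝ) ^ η * z)}
        ≤ ENNReal.ofReal (β / z ^ ξ))
    (ρ : ℝ) (hρ : 0 < ρ) :
    Filter.Tendsto
      (fun n : ℕ => ∫ ω, (∑ i ∈ Finset.range n, (X i ω + ρ * Y i ω)) / n ∂P)
      Filter.atTop (nhds ((∫ ω, X 0 ω ∂P) + ρ * μY)) ∧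
    ∃ β' : ℝ, 1 < β' ∧ ∀ n : ℕ, 1 ≤ n → ∀ z : ℝ, 1 ≤ z →
      P {ω | (n : ℝ) * ((∑ i ∈ Finset.range n, (X i ω + ρ * Y i ω)) / n)
            - n * ((∫ ω', X 0 ω' ∂P) + ρ * μY) ≥ (n : ℝ) ^ η * z}
        ≤ ENNReal.ofReal (β' / z ^ ξ) ∧
      P {ω | (n : ℝ) * ((∑ i ∈ Finset.range n, (X i ω + ρ * Y i ω)) / n)
            - n * ((∫ ω', X 0 ω' ∂P) + ρ * μY) ≤ -((n : ℝ) ^ η * z)}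
        ≤ ENNReal.ofReal (β' / z ^ ξ) :=
  sum_iid_plus_concentrated_sequence_general P B hB X Y hXmeas hXbdd hXiid hXident hYint μY hYconv β
    ξ η hβ hξ hη hYconc ρ hρ
end
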